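/- The Hirschhorn–Villarino formula is asymptotic to the Gamma function: lim_{x→∞} Γ(x+1) / (√π·(x/e)^x·(8x³ + 4x² + x + (1 - 11/(8x) + 79/(112x²))/30)^(1/6)) = 1. -/

import Mathlib

/-!
Stirling's formula for real arguments is obtained from Mathlib's version for factorials: by
log-convexity of `Γ`, `log Γ(x + 1)` lies between `log n! + (x - n) log x` and
`log n! + (x - n) log (n + 1)` for `n = ⌊x⌋`, so the logarithmic error of Stirling's approximation
at `x` differs from the one at `⌊x⌋` by `O(1 / x)`. The Hirschhorn–Villarino factor
`(8x³ + 4x² + x + …)^(1/6)` equals `√(2x) · (1 + O(1/x))^(1/6)`, so it only perturbs Stirling's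
`√(2πx) (x/e)^x` by a factor tending to `1`.
-/

open Real Filter

open scoped Nat Topology

noncomputable def stirlingLogError (x : ℝ) : ℝ :=
  log (Gamma (x + 1)) - (x * log x - x + log (2 * π * x) / 2)

theorem stirlingLogError_natCast_eq {n : ℕ} (hn : n ≠ 0) :
    stirlingLogError n = log (Stirling.stirlingSeq n) - log √π := by
  have hn0 : (0 : ℝ) < n := by positivity
  rw [Stirling.log_stirlingSeq_formula, stirlingLogError, Gamma_nat_eq_factorial,
    log_div hn0.ne' (exp_ne_zero 1), log_exp, log_mul (by norm_num) hn0.ne',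
    log_mul (by positivity) hn0.ne', log_mul (by norm_num) pi_pos.ne', sqrt_eq_rpow,
    log_rpow pi_pos]
  ring

theorem tendsto_stirlingLogError_natCast :
    Tendsto (fun n : ℕ => stirlingLogError n) atTop (𝓝 0) := by
  have h : Tendsto (fun n => log (Stirling.stirlingSeq n)) atTop (𝓝 (log √π)) :=
    (continuousAt_log (by positivity)).tendsto.comp Stirling.tendsto_stirlingSeq_sqrt_pi
  refine (sub_self (log √π) ▸ h.sub_const (log √π)).congr' ?_
  filter_upwards [eventually_ne_atTop 0] with n hn
  exact (stirlingLogError_natCast_eq hn).symm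

theorem log_Gamma_add_one_le_log_factorial_add {n : ℕ} {x : ℝ} (hnx : (n : ℝ) ≤ x)
    (hxn : x ≤ n + 1) :
    log (Gamma (x + 1)) ≤ log n ! + (x - n) * log (n + 1) := by
  have hconv := convexOn_log_Gamma.2 (Set.mem_Ioi.2 (by positivity : (0 : ℝ) < n + 1))
    (Set.mem_Ioi.2 (by positivity : (0 : ℝ) < n + 1 + 1))
    (by linarith : (0 : ℝ) ≤ 1 - (x - n)) (by linarith : (0 : ℝ) ≤ x - n) (by ring)
  have hpt : (1 - (x - n)) * ((n : ℝ) + 1) + (x - n) * (n + 1 + 1) = x + 1 := by ring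
  simp only [smul_eq_mul, Function.comp_apply, hpt] at hconv
  rw [Gamma_add_one (s := (n : ℝ) + 1) (by positivity), Gamma_nat_eq_factorial,
    log_mul (by positivity) (by positivity)] at hconv
  linarith

theorem log_factorial_add_le_log_Gamma_add_one {n : ℕ} {x : ℝ} (hx : 0 < x)
    (hnx : (n : ℝ) ≤ x) (hxn : x ≤ n + 1) :
    log n ! + (x - n) * log x ≤ log (Gamma (x + 1)) := by
  have hconv := convexOn_log_Gamma.2 (Set.mem_Ioi.2 hx) (Set.mem_Ioi.2 (by linarith : 0 < x + 1))
    (by linarith : (0 : ℝ) ≤ x - n) (by linarith : (0 : ℝ) ≤ 1 - (x - n)) (by ring)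
  have hpt : (x - n) * x + (1 - (x - n)) * (x + 1) = (n : ℝ) + 1 := by ring
  simp only [smul_eq_mul, Function.comp_apply, hpt] at hconv
  rw [Gamma_nat_eq_factorial, Gamma_add_one hx.ne',
    log_mul hx.ne' (Gamma_pos_of_pos hx).ne'] at hconv
  rw [Gamma_add_one hx.ne', log_mul hx.ne' (Gamma_pos_of_pos hx).ne']
  linarith

theorem abs_stirlingLogError_sub_le {n : ℕ} {x : ℝ} (hn : n ≠ 0) (hnx : (n : ℝ) ≤ x)
    (hxn : x ≤ n + 1) :
    |stirlingLogError x - stirlingLogError n| ≤ 2 / n := by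
  have hn0 : (0 : ℝ) < n := by positivity
  have hx0 : 0 < x := hn0.trans_le hnx
  have hupper := log_Gamma_add_one_le_log_factorial_add hnx hxn
  have hlower := log_factorial_add_le_log_Gamma_add_one hx0 hnx hxn
  set s := x - n with hs
  have hlog_lo : s / x ≤ log x - log n := by
    have h := one_sub_inv_le_log_of_pos (div_pos hx0 hn0)
    rw [log_div hx0.ne' hn0.ne', inv_div] at h
    calc s / x = 1 - n / x := by field_simp; ring
      _ ≤ _ := h
  have hlog_hi : log x - log n ≤ s / n := by
    have h := log_le_sub_one_of_pos (div_pos hx0 hn0)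
    rw [log_div hx0.ne' hn0.ne'] at h
    calc _ ≤ x / n - 1 := h
      _ = s / n := by field_simp; ring
  have hlog_succ : log (n + 1) - log x ≤ 1 / n := by
    have h := log_le_sub_one_of_pos (by positivity : (0 : ℝ) < (n + 1) / x)
    rw [log_div (by positivity) hx0.ne'] at h
    calc _ ≤ (n + 1) / x - 1 := h
      _ = (n + 1 - x) / x := by field_simp
      _ ≤ 1 / n := by
        rw [div_le_div_iff₀ hx0 hn0]; nlinarith
  have hdiff : stirlingLogError x - stirlingLogError n = log (Gamma (x + 1)) - log n !
      - ((n + 1 / 2) * (log x - log n) + s * log x - s) := by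
    rw [stirlingLogError, stirlingLogError, Gamma_nat_eq_factorial,
      log_mul (by positivity) hx0.ne', log_mul (by positivity) hn0.ne']
    ring
  have hs0 : 0 ≤ s := by linarith
  have hs1 : s ≤ 1 := by linarith
  rw [abs_sub_le_iff, hdiff]
  constructor
  · have h1 : s * (log (n + 1) - log x) ≤ 1 / n :=
      (mul_le_of_le_one_left (sub_nonneg.2 (log_le_log hx0 hxn)) hs1).trans hlog_succ
    have h2 : (n : ℝ) * (s / x) ≤ n * (log x - log n) :=
      mul_le_mul_of_nonneg_left hlog_lo hn0.le
    have h3 : s - n * (s / x) ≤ 1 / n := by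
      have : s - n * (s / x) = s * s / x := by field_simp; ring
      have hss : s * s ≤ 1 := by nlinarith
      rw [this, div_le_div_iff₀ hx0 hn0]
      nlinarith [mul_le_mul_of_nonneg_right hss hn0.le]
    have h4 : 0 ≤ log x - log n := (div_nonneg hs0 hx0.le).trans hlog_lo
    have h5 : (2 : ℝ) / n = 1 / n + 1 / n := by ring
    linarith
  · have h1 : ((n : ℝ) + 1 / 2) * (log x - log n) ≤ (n + 1 / 2) * (s / n) :=
      mul_le_mul_of_nonneg_left hlog_hi (by positivity)
    have h2 : ((n : ℝ) + 1 / 2) * (s / n) = s + s / (2 * n) := by field_simp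
    have h3 : s / (2 * n) ≤ 2 / n := by
      rw [div_le_div_iff₀ (by positivity) hn0]; nlinarith
    linarith

theorem tendsto_stirlingLogError : Tendsto stirlingLogError atTop (𝓝 0) := by
  have hfloor : Tendsto (fun x : ℝ => stirlingLogError ⌊x⌋₊) atTop (𝓝 0) :=
    tendsto_stirlingLogError_natCast.comp tendsto_nat_floor_atTop
  have hgap : Tendsto (fun x : ℝ => stirlingLogError x - stirlingLogError ⌊x⌋₊) atTop (𝓝 0) := by
    refine squeeze_zero_norm' ?_
      ((tendsto_const_div_atTop_nhds_zero_nat 2).comp tendsto_nat_floor_atTop)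
    filter_upwards [eventually_ge_atTop 1] with x hx
    exact abs_stirlingLogError_sub_le (Nat.floor_pos.2 hx).ne' (Nat.floor_le (by linarith))
      (Nat.lt_floor_add_one x).le
  simpa using hfloor.add hgap

theorem exp_stirlingLogError {x : ℝ} (hx : 0 < x) :
    exp (stirlingLogError x) = Gamma (x + 1) / (√(2 * π * x) * (x / exp 1) ^ x) := by
  have hpow : (x / exp 1) ^ x = exp (x * log x - x) := by
    rw [rpow_def_of_pos (by positivity), log_div hx.ne' (exp_ne_zero 1), log_exp, mul_comm]
    ring_nf
  have hsqrt : √(2 * π * x) = exp (log (2 * π * x) / 2) := by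
    rw [sqrt_eq_rpow, rpow_def_of_pos (by positivity)]
    ring_nf
  rw [stirlingLogError, exp_sub, exp_log (Gamma_pos_of_pos (by linarith)), hpow, hsqrt,
    ← exp_add]
  ring_nf

theorem tendsto_Gamma_add_one_div_stirling :
    Tendsto (fun x : ℝ => Gamma (x + 1) / (√(2 * π * x) * (x / exp 1) ^ x)) atTop (𝓝 1) := by
  refine (exp_zero ▸ (continuous_exp.tendsto 0).comp tendsto_stirlingLogError).congr' ?_
  filter_upwards [eventually_gt_atTop 0] with x hx
  exact exp_stirlingLogError hx

theorem hirschhornVillarino_div_cube_eq {x : ℝ} (hx : x ≠ 0) :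
    (8 * x ^ 3 + 4 * x ^ 2 + x + (1 - 11 / (8 * x) + 79 / (112 * x ^ 2)) / 30) / (8 * x ^ 3) =
      1 + x⁻¹ / 2 + x⁻¹ ^ 2 / 8 + x⁻¹ ^ 3 / 240 - 11 * x⁻¹ ^ 4 / 1920 + 79 * x⁻¹ ^ 5 / 26880 := by
  field_simp
  ring

theorem tendsto_hirschhornVillarino_div_cube :
    Tendsto (fun x : ℝ =>
      (8 * x ^ 3 + 4 * x ^ 2 + x + (1 - 11 / (8 * x) + 79 / (112 * x ^ 2)) / 30) / (8 * x ^ 3))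
      atTop (𝓝 1) := by
  have hpoly : Continuous fun t : ℝ =>
      1 + t / 2 + t ^ 2 / 8 + t ^ 3 / 240 - 11 * t ^ 4 / 1920 + 79 * t ^ 5 / 26880 := by
    fun_prop
  have h := (hpoly.tendsto 0).comp tendsto_inv_atTop_zero
  norm_num at h
  refine h.congr' ?_
  filter_upwards [eventually_gt_atTop 0] with x hx
  exact (hirschhornVillarino_div_cube_eq hx.ne').symm

theorem sqrt_two_pi_mul_eq_sqrt_pi_mul_rpow {x : ℝ} (hx : 0 ≤ x) :
    √(2 * π * x) = √π * (8 * x ^ 3) ^ ((1 : ℝ) / 6) := by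
  have h8 : (8 * x ^ 3) ^ ((1 : ℝ) / 6) = √(2 * x) := by
    rw [show 8 * x ^ 3 = (2 * x) ^ (3 : ℝ) by norm_num [mul_pow], ← rpow_mul (by positivity),
      sqrt_eq_rpow]
    norm_num
  rw [h8, ← sqrt_mul pi_pos.le]
  ring_nf

theorem stmt_8 :
    Tendsto (fun x : ℝ => Gamma (x + 1) /
      (Real.sqrt π * (x / exp 1) ^ x *
        (8 * x ^ 3 + 4 * x ^ 2 + x +
          (1 - 11 / (8 * x) + 79 / (112 * x ^ 2)) / 30) ^ ((1:ℝ)/6))) atTop (nhds 1) := by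
  have hratio := tendsto_hirschhornVillarino_div_cube
  have hroot := (continuousAt_rpow_const 1 ((1 : ℝ) / 6) (Or.inl one_ne_zero)).tendsto.comp
    hratio
  rw [one_rpow] at hroot
  have hquot := tendsto_Gamma_add_one_div_stirling.div hroot one_ne_zero
  rw [div_one] at hquot
  refine hquot.congr' ?_
  filter_upwards [eventually_gt_atTop 0, hratio.eventually (lt_mem_nhds zero_lt_one)]
    with x hx hpos
  have hQ : 0 ≤ 8 * x ^ 3 + 4 * x ^ 2 + x + (1 - 11 / (8 * x) + 79 / (112 * x ^ 2)) / 30 :=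
    (div_pos_iff_of_pos_right (by positivity)).1 hpos |>.le
  dsimp only [Pi.div_apply, Function.comp_apply]
  rw [div_rpow hQ (by positivity), sqrt_two_pi_mul_eq_sqrt_pi_mul_rpow hx.le]
  have hcube_root : (0 : ℝ) < (8 * x ^ 3) ^ ((1 : ℝ) / 6) := by positivity
  field_simp
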